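/- arXiv:2506.11873 — 6 statements merged into one kernel-verified Lean document; each statement's English description precedes it below -/
import Mathlib

section
/- Let (M, η) be a k-contact manifold with η = η^α ⊗ e_α. Then there exists a unique family of vector fields R_1,...,R_k on M (the Reeb vector fields) such that ι_{R_α} η^β = δ_α^β and ι_{R_α} dη^β = 0 for all α, β = 1,...,k. -/
open scoped BigOperators

variable {E : Type*} [NormedAddCommGroup E] [NormedSpace ℝ E]

/-- The exterior derivative of a one-form `θ` at `x`, evaluated on (constant) tangent
vectors `u`, `v`: `dθ_x(u,v) = D_u(θ(v)) - D_v(θ(u))`. -/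
noncomputable def extDerivAt (θ : E → (E →L[ℝ] ℝ)) (x : E) (u v : E) : ℝ :=
  fderiv ℝ θ x u v - fderiv ℝ θ x v u

/-- The Lie bracket of two vector fields on a vector space. -/
noncomputable def vBracket (X Y : E → E) (x : E) : E :=
  fderiv ℝ Y x (X x) - fderiv ℝ X x (Y x)

/-- `ker η` at a point: the intersection of the kernels of the components `η^α`. -/
noncomputable def kerEtaAt {k : ℕ} (η : Fin k → E → (E →L[ℝ] ℝ)) (x : E) :
    Submodule ℝ E :=
  ⨅ α, LinearMap.ker (η α x : E →ₗ[ℝ] ℝ)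

/-- `ker dη` at a point: vectors whose contraction with every `dη^α` vanishes. -/
noncomputable def kerDEtaAt {k : ℕ} (η : Fin k → E → (E →L[ℝ] ℝ)) (x : E) : Set E :=
  {v | ∀ (α : Fin k) (u : E), extDerivAt (η α) x v u = 0}

/- STATEMENT 2: On a k-contact manifold (M, η) there exists a unique family of
vector fields R_1,...,R_k (the Reeb vector fields) with ι_{R_α} η^β = δ_α^β and
ι_{R_α} dη^β = 0. -/
theorem exists_unique_Reeb {k : ℕ} [FiniteDimensional ℝ E]
    (η : Fin k → E → (E →L[ℝ] ℝ)) (hsm : ∀ α, ContDiff ℝ (⊤ : ℕ∞) (η α))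
    -- ker η is a regular distribution of corank k
    (hker : ∀ x, Module.finrank ℝ (kerEtaAt η x) + k = Module.finrank ℝ E)
    -- ker dη is a regular distribution of rank k
    (hkerd : ∀ x, ∃ f : Fin k → E, LinearIndependent ℝ f ∧
      kerDEtaAt η x = (Submodule.span ℝ (Set.range f) : Submodule ℝ E))
    -- ker η ∩ ker dη = 0
    (hint : ∀ x, ∀ v ∈ kerEtaAt η x, v ∈ kerDEtaAt η x → v = 0) :
    ∃! R : Fin k → E → E, ∀ (α β : Fin k) (x : E),
      η β x (R α x) = (if α = β then (1 : ℝ) else 0) ∧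
      ∀ u : E, extDerivAt (η β) x (R α x) u = 0 := by
  classical
  -- `ker dη` at `x` as a submodule
  have hadd : ∀ x (v w : E), v ∈ kerDEtaAt η x → w ∈ kerDEtaAt η x →
      v + w ∈ kerDEtaAt η x := by
    intro x v w hv hw α u
    have := hv α u; have := hw α u
    simp only [extDerivAt, map_add, ContinuousLinearMap.add_apply] at *
    linarith
  have hsmul : ∀ x (c : ℝ) (v : E), v ∈ kerDEtaAt η x →
      c • v ∈ kerDEtaAt η x := by
    intro x c v hv α u
    have := hv α u
    simp only [extDerivAt, map_smul, ContinuousLinearMap.smul_apply,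
      smul_eq_mul] at *
    linarith [mul_eq_mul_left_iff.mpr (Or.inl this : _ ∨ c = 0)]
  have hzero : ∀ x, (0 : E) ∈ kerDEtaAt η x := by
    intro x α u
    simp [extDerivAt]
  let D : E → Submodule ℝ E := fun x =>
    { carrier := kerDEtaAt η x
      add_mem' := fun hv hw => hadd x _ _ hv hw
      zero_mem' := hzero x
      smul_mem' := fun c v hv => hsmul x c v hv }
  have hDmem : ∀ x v, v ∈ D x ↔ v ∈ kerDEtaAt η x := fun _ _ => Iff.rfl
  -- the pointwise map to ℝ^k
  let φ : E → (E →ₗ[ℝ] (Fin k → ℝ)) := fun x =>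
    LinearMap.pi fun β => (η β x : E →ₗ[ℝ] ℝ)
  let ψ : ∀ x : E, (D x →ₗ[ℝ] (Fin k → ℝ)) := fun x => (φ x).comp (D x).subtype
  have hinj : ∀ x, Function.Injective (ψ x) := by
    intro x
    rw [← LinearMap.ker_eq_bot, LinearMap.ker_eq_bot']
    rintro ⟨v, hv⟩ h0
    have hη : ∀ β, η β x v = 0 := by
      intro β
      have := congrFun h0 β
      simpa [ψ, φ] using this
    have hE : v ∈ kerEtaAt η x := by
      simp only [kerEtaAt, Submodule.mem_iInf, LinearMap.mem_ker]
      exact hη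
    have : v = 0 := hint x v hE hv
    exact Subtype.ext this
  have hfin : ∀ x, Module.finrank ℝ (D x) = Module.finrank ℝ (Fin k → ℝ) := by
    intro x
    obtain ⟨f, hli, hspan⟩ := hkerd x
    have hDx : D x = Submodule.span ℝ (Set.range f) := SetLike.ext' hspan
    rw [hDx, finrank_span_eq_card hli]
    simp
  let e : ∀ x : E, (D x ≃ₗ[ℝ] (Fin k → ℝ)) := fun x =>
    LinearMap.linearEquivOfInjective (ψ x) (hinj x) (hfin x)
  have he : ∀ x (v : D x), e x v = fun β => η β x v := fun x v => rfl
  refine ⟨fun α x => ((e x).symm (Pi.single α 1) : E), ?_, ?_⟩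
  · intro α β x
    set w : D x := (e x).symm (Pi.single α 1) with hw
    have hew : e x w = Pi.single α 1 := (e x).apply_symm_apply _
    have hηw : ∀ γ, η γ x (w : E) = (Pi.single α 1 : Fin k → ℝ) γ := by
      intro γ
      have := congrFun hew γ
      rw [← this]; rfl
    constructor
    · rw [hηw β]
      by_cases h : α = β
      · subst h; simp
      · simp [Pi.single_apply, h, Ne.symm h]
    · intro u
      exact w.2 β u
  · intro R' hR'
    funext α x
    have hmem : R' α x ∈ D x := fun β u => (hR' α β x).2 u
    have : ψ x ⟨R' α x, hmem⟩ = Pi.single α 1 := by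
      funext β
      have := (hR' α β x).1
      simp only [ψ, φ, LinearMap.comp_apply, LinearMap.pi_apply]
      rw [Pi.single_apply]
      by_cases h : α = β
      · subst h; simpa using this
      · simp only [if_neg h] at this
        simpa [Ne.symm h] using this
    have heq : e x ⟨R' α x, hmem⟩ = Pi.single α 1 := this
    have := congrArg (e x).symm heq
    rw [(e x).symm_apply_apply] at this
    exact congrArg Subtype.val this
end

section
/- Let (M, η) be a k-contact manifold with Reeb vector fields R_1,...,R_k. Then the Reeb vector fields pairwise commute: [R_α, R_β] = 0 for all α, β = 1,...,k. -/
open scoped BigOperators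

variable {E : Type*} [NormedAddCommGroup E] [NormedSpace ℝ E]

private lemma deriv_pairing_const' {θ : E → (E →L[ℝ] ℝ)} {X : E → E} (x : E)
    (hθ : ContDiff ℝ (⊤ : ℕ∞) θ) (hX : ContDiff ℝ (⊤ : ℕ∞) X) {c : ℝ}
    (hc : ∀ y, θ y (X y) = c) (w : E) :
    θ x (fderiv ℝ X x w) + fderiv ℝ θ x w (X x) = 0 := by
  have h1 : HasFDerivAt (fun y => θ y (X y))
      ((θ x).comp (fderiv ℝ X x) + (fderiv ℝ θ x).flip (X x)) x :=
    ((hθ.differentiable (by simp) x).hasFDerivAt).clm_apply ((hX.differentiable (by simp) x).hasFDerivAt)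
  have h2 : HasFDerivAt (fun y => θ y (X y)) (0 : E →L[ℝ] ℝ) x := by
    have : (fun y => θ y (X y)) = fun _ => c := funext hc
    rw [this]; exact hasFDerivAt_const c x
  have h' := ContinuousLinearMap.ext_iff.1 (h1.unique h2) w
  simpa using h'

private lemma deriv_identity' {θ : E → (E →L[ℝ] ℝ)} {X : E → E} (x : E)
    (hθ : ContDiff ℝ (⊤ : ℕ∞) θ) (hX : ContDiff ℝ (⊤ : ℕ∞) X)
    (hz : ∀ y u, fderiv ℝ θ y (X y) u = fderiv ℝ θ y u (X y)) (w v : E) :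
    fderiv ℝ θ x (fderiv ℝ X x w) v + fderiv ℝ (fderiv ℝ θ) x w (X x) v
      = fderiv ℝ θ x v (fderiv ℝ X x w) + fderiv ℝ (fderiv ℝ θ) x w v (X x) := by
  have hF : ContDiff ℝ (⊤ : ℕ∞) (fderiv ℝ θ) := hθ.fderiv_right (by simp)
  have hFx : HasFDerivAt (fderiv ℝ θ) (fderiv ℝ (fderiv ℝ θ) x) x :=
    (hF.differentiable (by simp) x).hasFDerivAt
  have hXx : HasFDerivAt X (fderiv ℝ X x) x := (hX.differentiable (by simp) x).hasFDerivAt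
  have h2 := (hFx.clm_apply hXx).clm_apply (hasFDerivAt_const v x)
  have h4 := (hFx.clm_apply (hasFDerivAt_const v x)).clm_apply hXx
  have h6 : HasFDerivAt (fun y => fderiv ℝ θ y (X y) v - fderiv ℝ θ y v (X y))
      (0 : E →L[ℝ] ℝ) x := by
    have : (fun y => fderiv ℝ θ y (X y) v - fderiv ℝ θ y v (X y)) = fun _ => (0:ℝ) := by
      funext y; rw [hz y v]; ring
    rw [this]; exact hasFDerivAt_const 0 x
  have h' := ContinuousLinearMap.ext_iff.1 ((h2.sub h4).unique h6) w
  simp at h'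
  linarith

/- STATEMENT 3: The Reeb vector fields of a k-contact manifold pairwise commute:
[R_α, R_β] = 0. -/
theorem Reeb_commute {k : ℕ} [FiniteDimensional ℝ E]
    (η : Fin k → E → (E →L[ℝ] ℝ)) (hsm : ∀ α, ContDiff ℝ (⊤ : ℕ∞) (η α))
    (hker : ∀ x, Module.finrank ℝ (kerEtaAt η x) + k = Module.finrank ℝ E)
    (hkerd : ∀ x, ∃ f : Fin k → E, LinearIndependent ℝ f ∧
      kerDEtaAt η x = (Submodule.span ℝ (Set.range f) : Submodule ℝ E))
    (hint : ∀ x, ∀ v ∈ kerEtaAt η x, v ∈ kerDEtaAt η x → v = 0)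
    (R : Fin k → E → E) (hRsm : ∀ α, ContDiff ℝ (⊤ : ℕ∞) (R α))
    (hR1 : ∀ (α β : Fin k) (x : E), η β x (R α x) = (if α = β then (1 : ℝ) else 0))
    (hR2 : ∀ (α β : Fin k) (x : E) (u : E), extDerivAt (η β) x (R α x) u = 0) :
    ∀ (α β : Fin k) (x : E), vBracket (R α) (R β) x = 0 := by
  intro α β x
  have hz : ∀ γ δ (y u : E), fderiv ℝ (η γ) y (R δ y) u = fderiv ℝ (η γ) y u (R δ y) := by
    intro γ δ y u
    have h := hR2 δ γ y u
    unfold extDerivAt at h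
    linarith
  have hsymm : ∀ γ (v w : E),
      fderiv ℝ (fderiv ℝ (η γ)) x v w = fderiv ℝ (fderiv ℝ (η γ)) x w v := by
    intro γ v w
    exact second_derivative_symmetric
      (fun y => ((hsm γ).differentiable (by simp) y).hasFDerivAt)
      (((((hsm γ).fderiv_right (m := (⊤ : ℕ∞)) (by simp)).differentiable (by simp)) x).hasFDerivAt) v w
  have hbeq : vBracket (R α) (R β) x
      = fderiv ℝ (R β) x (R α x) - fderiv ℝ (R α) x (R β x) := rfl
  have hkerb : ∀ γ, η γ x (vBracket (R α) (R β) x) = 0 := by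
    intro γ
    have hA := deriv_pairing_const' x (hsm γ) (hRsm α)
      (c := if α = γ then (1:ℝ) else 0) (fun y => hR1 α γ y) (R β x)
    have hB := deriv_pairing_const' x (hsm γ) (hRsm β)
      (c := if β = γ then (1:ℝ) else 0) (fun y => hR1 β γ y) (R α x)
    have h2 := hz γ α x (R β x)
    have h3 := hz γ β x (R α x)
    rw [hbeq, map_sub]
    linarith
  have hkerdb : vBracket (R α) (R β) x ∈ kerDEtaAt η x := by
    intro γ u
    have Iα := fun w v => deriv_identity' x (hsm γ) (hRsm α) (hz γ α) w v
    have Iβ := fun w v => deriv_identity' x (hsm γ) (hRsm β) (hz γ β) w v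
    have key : fderiv ℝ (fderiv ℝ (η γ)) x u (R α x) (R β x)
        = fderiv ℝ (fderiv ℝ (η γ)) x u (R β x) (R α x) := by
      have h1 := Iα u (R β x)
      have h2 := hz γ β x (fderiv ℝ (R α) x u)
      linarith
    have h1 := Iα (R β x) u
    have h2 := Iβ (R α x) u
    have s1 := DFunLike.congr_fun (hsymm γ (R β x) (R α x)) u
    have s2 := DFunLike.congr_fun (hsymm γ (R β x) u) (R α x)
    have s3 := DFunLike.congr_fun (hsymm γ (R α x) u) (R β x)
    unfold extDerivAt
    rw [hbeq, map_sub, map_sub]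
    simp only [ContinuousLinearMap.sub_apply]
    linarith
  exact hint x _ ((Submodule.mem_iInf _).2 fun γ => LinearMap.mem_ker.2 (hkerb γ)) hkerdb
end

section
/- Let (P, θ) be an exact k-symplectic manifold, i.e., ω = dθ is a closed nondegenerate ℝ^k-valued two-form. On M = P × ℝ^k, with z^1,...,z^k the pullback of Cartesian coordinates on ℝ^k and θ_M^α the pullback of θ^α along the projection M → P, the ℝ^k-valued one-form η = Σ_α (dz^α + θ_M^α) ⊗ e_α is a k-contact form: ker η is a nonzero regular distribution of corank k, ker dη = span(∂/∂z^1,...,∂/∂z^k) has rank k, and ker η ∩ ker dη = 0. -/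
open scoped BigOperators

variable {E : Type*} [NormedAddCommGroup E] [NormedSpace ℝ E]

/-- The contactification one-form `η^α = dz^α + θ_M^α` on `M = P × ℝ^k`. -/
noncomputable def contactify {k : ℕ} (θ : Fin k → E → (E →L[ℝ] ℝ)) (α : Fin k)
    (m : E × (Fin k → ℝ)) : (E × (Fin k → ℝ)) →L[ℝ] ℝ :=
  (ContinuousLinearMap.proj α).comp (ContinuousLinearMap.snd ℝ E (Fin k → ℝ)) +
    (θ α m.1).comp (ContinuousLinearMap.fst ℝ E (Fin k → ℝ))


lemma contactify_apply {k : ℕ} (θ : Fin k → E → (E →L[ℝ] ℝ)) (α : Fin k)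
    (m v : E × (Fin k → ℝ)) : contactify θ α m v = v.2 α + θ α m.1 v.1 := rfl

lemma extDeriv_contactify {k : ℕ} (θ : Fin k → E → (E →L[ℝ] ℝ))
    (hθ : ∀ α, ContDiff ℝ (⊤ : ℕ∞) (θ α)) (α : Fin k) (m v u : E × (Fin k → ℝ)) :
    extDerivAt (contactify θ α) m v u = extDerivAt (θ α) m.1 v.1 u.1 := by
  set L : (E →L[ℝ] ℝ) →L[ℝ] ((E × (Fin k → ℝ)) →L[ℝ] ℝ) :=
    (ContinuousLinearMap.compL ℝ (E × (Fin k → ℝ)) E ℝ).flip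
      (ContinuousLinearMap.fst ℝ E (Fin k → ℝ)) with hL
  have hθd : HasFDerivAt (θ α) (fderiv ℝ (θ α) m.1) m.1 :=
    (((hθ α).differentiable (by simp)) m.1).hasFDerivAt
  have h1 : HasFDerivAt (fun n : E × (Fin k → ℝ) => L (θ α n.1))
      (L.comp ((fderiv ℝ (θ α) m.1).comp (ContinuousLinearMap.fst ℝ E (Fin k → ℝ)))) m :=
    (L.hasFDerivAt.comp m.1 hθd).comp m
      ((ContinuousLinearMap.fst ℝ E (Fin k → ℝ)).hasFDerivAt)
  have h2 : HasFDerivAt (contactify θ α)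
      (L.comp ((fderiv ℝ (θ α) m.1).comp (ContinuousLinearMap.fst ℝ E (Fin k → ℝ)))) m := by
    have := h1.const_add ((ContinuousLinearMap.proj α : (Fin k → ℝ) →L[ℝ] ℝ).comp
      (ContinuousLinearMap.snd ℝ E (Fin k → ℝ)))
    exact this
  have hf := h2.fderiv
  simp only [extDerivAt, hf]
  simp [hL, ContinuousLinearMap.compL_apply]

/- STATEMENT 5: If (P, θ) is an exact k-symplectic manifold, then on M = P × ℝ^k the
form η = (dz^α + θ_M^α) ⊗ e_α is a k-contact form: ker η is a nonzero regular
distribution of corank k, ker dη = span(∂/∂z^α) has rank k, and ker η ∩ ker dη = 0. -/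
theorem contactification_is_k_contact {k : ℕ}
    [FiniteDimensional ℝ E] [Nontrivial E]
    (θ : Fin k → E → (E →L[ℝ] ℝ)) (hθ : ∀ α, ContDiff ℝ (⊤ : ℕ∞) (θ α))
    -- ω = dθ is nondegenerate: ∩_α ker dθ^α = {0}
    (hnd : ∀ (p : E) (v : E), (∀ (α : Fin k) (u : E), extDerivAt (θ α) p v u = 0) → v = 0) :
    ∀ m : E × (Fin k → ℝ),
      (kerEtaAt (contactify θ) m ≠ ⊥ ∧
        Module.finrank ℝ (kerEtaAt (contactify θ) m) + k
          = Module.finrank ℝ (E × (Fin k → ℝ))) ∧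
      kerDEtaAt (contactify θ) m = {v : E × (Fin k → ℝ) | v.1 = 0} ∧
      (∀ v ∈ kerEtaAt (contactify θ) m, v ∈ kerDEtaAt (contactify θ) m → v = 0) := by
  intro m
  set g : E →ₗ[ℝ] E × (Fin k → ℝ) :=
    { toFun := fun u => (u, fun α => -(θ α m.1 u))
      map_add' := by intro a b; ext <;> simp [add_comm]
      map_smul' := by intro c a; ext <;> simp } with hg
  have hmem : ∀ v : E × (Fin k → ℝ), v ∈ kerEtaAt (contactify θ) m ↔
      ∀ α, v.2 α + θ α m.1 v.1 = 0 := by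
    intro v
    simp [kerEtaAt, Submodule.mem_iInf, contactify_apply]
  have hker : kerEtaAt (contactify θ) m = LinearMap.range g := by
    ext v
    rw [hmem]
    constructor
    · intro h
      refine ⟨v.1, ?_⟩
      have : (fun α => -(θ α m.1 v.1)) = v.2 := by
        funext α; have := h α; linarith
      simp [hg, this]
    · rintro ⟨u, rfl⟩
      intro α; simp [hg]
  have hginj : Function.Injective g := by
    intro a b hab
    simpa [hg, Prod.ext_iff] using congrArg Prod.fst hab
  constructor
  · constructor
    · rw [hker]
      obtain ⟨u, hu⟩ := exists_ne (0 : E)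
      intro hbot
      have : g u ∈ LinearMap.range g := ⟨u, rfl⟩
      rw [hbot, Submodule.mem_bot] at this
      exact hu (by simpa [hg, Prod.ext_iff] using congrArg Prod.fst this)
    · rw [hker, LinearMap.finrank_range_of_inj hginj]
      simp [Module.finrank_prod]
  constructor
  · ext v
    simp only [kerDEtaAt, Set.mem_setOf_eq]
    constructor
    · intro h
      refine hnd m.1 v.1 (fun α u => ?_)
      have := h α (u, 0)
      rwa [extDeriv_contactify θ hθ] at this
    · intro hv α u
      rw [extDeriv_contactify θ hθ, hv]
      simp [extDerivAt]
  · intro v hv hdv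
    have h1 : v.1 = 0 := by
      refine hnd m.1 v.1 (fun α u => ?_)
      have := hdv α (u, 0)
      rwa [extDeriv_contactify θ hθ] at this
    rw [hmem] at hv
    have h2 : v.2 = 0 := by
      funext α
      have := hv α
      rw [h1] at this
      simpa using this
    exact Prod.ext h1 h2
end

section
/- Let (M, η, h) be a k-contact Hamiltonian system in Darboux coordinates {q^i, p_i^α, z^α} with η = (dz^α - p_i^α dq^i) ⊗ e_α. A k-vector field X with X_α = (X_α)^i ∂/∂q^i + (X_α)^β_i ∂/∂p_i^β + (X_α)^β ∂/∂z^β satisfies the k-contact Hamilton–De Donder–Weyl equations Σ_α ι_{X_α} dη^α = dh - Σ_α (R_α h) η^α and Σ_α ι_{X_α} η^α = -h if and only if (X_α)^i = ∂h/∂p_i^α, Σ_α (X_α)^α_i = -(∂h/∂q^i + Σ_α p_i^α ∂h/∂z^α), and Σ_α (X_α)^α = Σ_{i,α} p_i^α ∂h/∂p_i^α - h. -/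
open scoped BigOperators

/-- Darboux expression of the k-contact form components, `η^α = dz^α - p_i^α dq^i`,
on `M = (Fin n → ℝ) × (Fin k → Fin n → ℝ) × (Fin k → ℝ)` with `x = (q, p, z)`. -/
def etaDarboux {n k : ℕ} (α : Fin k)
    (x v : (Fin n → ℝ) × (Fin k → Fin n → ℝ) × (Fin k → ℝ)) : ℝ :=
  v.2.2 α - ∑ i : Fin n, x.2.1 α i * v.1 i

/-- Darboux expression of `dη^α = dq^i ∧ dp_i^α`. -/
def dEtaDarboux {n k : ℕ} (α : Fin k)
    (u v : (Fin n → ℝ) × (Fin k → Fin n → ℝ) × (Fin k → ℝ)) : ℝ :=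
  ∑ i : Fin n, (u.1 i * v.2.1 α i - v.1 i * u.2.1 α i)

lemma clm_decomp {n k : ℕ} (L : ((Fin n → ℝ) × (Fin k → Fin n → ℝ) × (Fin k → ℝ)) →L[ℝ] ℝ)
    (v : (Fin n → ℝ) × (Fin k → Fin n → ℝ) × (Fin k → ℝ)) :
    L v = (∑ i : Fin n, v.1 i * L (Pi.single i 1, 0, 0))
        + (∑ α : Fin k, ∑ i : Fin n, v.2.1 α i * L (0, Pi.single α (Pi.single i 1), 0))
        + ∑ α : Fin k, v.2.2 α * L (0, 0, Pi.single α 1) := by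
  have hv : v = (∑ i : Fin n, v.1 i • ((Pi.single i 1 : Fin n → ℝ), (0 : Fin k → Fin n → ℝ), (0 : Fin k → ℝ)))
      + (∑ α : Fin k, ∑ i : Fin n, v.2.1 α i • ((0 : Fin n → ℝ), (Pi.single α (Pi.single i 1) : Fin k → Fin n → ℝ), (0 : Fin k → ℝ)))
      + ∑ α : Fin k, v.2.2 α • ((0 : Fin n → ℝ), (0 : Fin k → Fin n → ℝ), (Pi.single α 1 : Fin k → ℝ)) := by
    refine Prod.ext ?_ (Prod.ext ?_ ?_)
    · funext j
      simp [Prod.fst_sum, Prod.snd_sum, Finset.sum_apply, Pi.single_apply]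
    · funext β j
      simp [Prod.fst_sum, Prod.snd_sum, Finset.sum_apply, Pi.single_apply, apply_ite,
        Finset.sum_ite_eq]
    · funext β
      simp [Prod.fst_sum, Prod.snd_sum, Finset.sum_apply, Pi.single_apply]
  have h1 : ∀ (c : ℝ) (a : Fin n → ℝ),
      L (c • a, (0 : Fin k → Fin n → ℝ), (0 : Fin k → ℝ)) = c * L (a, 0, 0) := by
    intro c a
    have := L.map_smul c (a, (0 : Fin k → Fin n → ℝ), (0 : Fin k → ℝ))
    simpa using this
  have h2 : ∀ (c : ℝ) (a : Fin k → Fin n → ℝ),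
      L ((0 : Fin n → ℝ), c • a, (0 : Fin k → ℝ)) = c * L (0, a, 0) := by
    intro c a
    have := L.map_smul c ((0 : Fin n → ℝ), a, (0 : Fin k → ℝ))
    simpa using this
  have h3 : ∀ (c : ℝ) (a : Fin k → ℝ),
      L ((0 : Fin n → ℝ), (0 : Fin k → Fin n → ℝ), c • a) = c * L (0, 0, a) := by
    intro c a
    have := L.map_smul c ((0 : Fin n → ℝ), (0 : Fin k → Fin n → ℝ), a)
    simpa using this
  conv_lhs => rw [hv]
  simp only [map_add, map_sum, Prod.smul_mk, smul_zero, h1, h2, h3]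


/- STATEMENT 10: In Darboux coordinates (where the Reeb fields are R_α = ∂/∂z^α), a
k-vector field X satisfies the k-contact Hamilton–De Donder–Weyl equations
Σ_α ι_{X_α} dη^α = dh - Σ_α (R_α h) η^α and Σ_α ι_{X_α} η^α = -h iff
(X_α)^i = ∂h/∂p_i^α, Σ_α (X_α)^α_i = -(∂h/∂q^i + Σ_α p_i^α ∂h/∂z^α), and
Σ_α (X_α)^α = Σ_{i,α} p_i^α ∂h/∂p_i^α - h. -/
theorem k_contact_HDW_coordinates {n k : ℕ}
    (h : (Fin n → ℝ) × (Fin k → Fin n → ℝ) × (Fin k → ℝ) → ℝ)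
    (hh : Differentiable ℝ h)
    (X : Fin k → (Fin n → ℝ) × (Fin k → Fin n → ℝ) × (Fin k → ℝ) →
      (Fin n → ℝ) × (Fin k → Fin n → ℝ) × (Fin k → ℝ)) :
    ((∀ (x v : (Fin n → ℝ) × (Fin k → Fin n → ℝ) × (Fin k → ℝ)),
        ∑ α : Fin k, dEtaDarboux α (X α x) v
          = fderiv ℝ h x v
            - ∑ α : Fin k,
                fderiv ℝ h x (0, 0, Pi.single α 1) * etaDarboux α x v) ∧
      (∀ x : (Fin n → ℝ) × (Fin k → Fin n → ℝ) × (Fin k → ℝ),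
        ∑ α : Fin k, etaDarboux α x (X α x) = -h x)) ↔
    (∀ x : (Fin n → ℝ) × (Fin k → Fin n → ℝ) × (Fin k → ℝ),
      (∀ (α : Fin k) (i : Fin n),
        (X α x).1 i = fderiv ℝ h x (0, Pi.single α (Pi.single i 1), 0)) ∧
      (∀ i : Fin n,
        ∑ α : Fin k, (X α x).2.1 α i
          = -(fderiv ℝ h x (Pi.single i 1, 0, 0)
              + ∑ α : Fin k, x.2.1 α i * fderiv ℝ h x (0, 0, Pi.single α 1))) ∧
      ∑ α : Fin k, (X α x).2.2 α
        = (∑ α : Fin k, ∑ i : Fin n,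
            x.2.1 α i * fderiv ℝ h x (0, Pi.single α (Pi.single i 1), 0)) - h x) := by
  constructor
  · rintro ⟨H1, H2⟩ x
    have hA : ∀ (α : Fin k) (i : Fin n),
        (X α x).1 i = fderiv ℝ h x (0, Pi.single α (Pi.single i 1), 0) := by
      intro α i
      have := H1 x (0, Pi.single α (Pi.single i 1), 0)
      simpa [dEtaDarboux, etaDarboux, Pi.single_apply, ite_apply, apply_ite, mul_ite, ite_mul,
        Finset.sum_ite_eq, Finset.sum_ite_eq'] using this
    refine ⟨hA, ?_, ?_⟩
    · intro i
      have := H1 x (Pi.single i 1, 0, 0)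
      simp [dEtaDarboux, etaDarboux, Pi.single_apply, apply_ite, mul_ite, ite_mul,
        Finset.sum_ite_eq, Finset.sum_ite_eq', Finset.sum_sub_distrib] at this
      have comm : ∑ α : Fin k, x.2.1 α i * fderiv ℝ h x (0, 0, Pi.single α 1)
          = ∑ α : Fin k, fderiv ℝ h x (0, 0, Pi.single α 1) * x.2.1 α i := by
        simp [mul_comm]
      rw [comm]
      simp only [Prod.mk_zero_zero] at this ⊢
      linarith [this]
    · have := H2 x
      simp only [etaDarboux, Finset.sum_sub_distrib] at this
      have e : ∑ α : Fin k, ∑ i : Fin n, x.2.1 α i * (X α x).1 i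
          = ∑ α : Fin k, ∑ i : Fin n,
              x.2.1 α i * fderiv ℝ h x (0, Pi.single α (Pi.single i 1), 0) := by
        refine Finset.sum_congr rfl fun α _ => Finset.sum_congr rfl fun i _ => ?_
        rw [hA α i]
      linarith [this, e.symm ▸ this]
  · intro H
    constructor
    · intro x v
      obtain ⟨hA, hB, hC⟩ := H x
      rw [clm_decomp (fderiv ℝ h x) v]
      simp only [dEtaDarboux, etaDarboux, Finset.sum_sub_distrib]
      have EA : ∑ α : Fin k, ∑ i : Fin n, (X α x).1 i * v.2.1 α i
          = ∑ α : Fin k, ∑ i : Fin n,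
              v.2.1 α i * fderiv ℝ h x (0, Pi.single α (Pi.single i 1), 0) := by
        refine Finset.sum_congr rfl fun α _ => Finset.sum_congr rfl fun i _ => ?_
        rw [hA α i, mul_comm]
      have EB : ∑ α : Fin k, ∑ i : Fin n, v.1 i * (X α x).2.1 α i
          = ∑ i : Fin n, v.1 i *
              (-(fderiv ℝ h x (Pi.single i 1, 0, 0)
                + ∑ α : Fin k, x.2.1 α i * fderiv ℝ h x (0, 0, Pi.single α 1))) := by
        rw [Finset.sum_comm]
        refine Finset.sum_congr rfl fun i _ => ?_
        rw [← Finset.mul_sum, hB i]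
      have Eswap : ∑ i : Fin n, v.1 i *
            ∑ α : Fin k, x.2.1 α i * fderiv ℝ h x (0, 0, Pi.single α 1)
          = ∑ α : Fin k, fderiv ℝ h x (0, 0, Pi.single α 1) *
              ∑ i : Fin n, x.2.1 α i * v.1 i := by
        simp only [Finset.mul_sum]
        rw [Finset.sum_comm]
        exact Finset.sum_congr rfl fun α _ => Finset.sum_congr rfl fun i _ => by ring
      have Ecomm : ∑ α : Fin k, fderiv ℝ h x (0, 0, Pi.single α 1) * v.2.2 α
          = ∑ α : Fin k, v.2.2 α * fderiv ℝ h x (0, 0, Pi.single α 1) := by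
        simp [mul_comm]
      simp only [mul_sub, Finset.sum_sub_distrib] at *
      rw [EA, EB]
      simp only [mul_neg, mul_add, Finset.sum_neg_distrib, Finset.sum_add_distrib]
      rw [Eswap, Ecomm]
      ring
    · intro x
      obtain ⟨hA, hB, hC⟩ := H x
      simp only [etaDarboux, Finset.sum_sub_distrib, hC]
      have e : ∑ α : Fin k, ∑ i : Fin n, x.2.1 α i * (X α x).1 i
          = ∑ α : Fin k, ∑ i : Fin n,
              x.2.1 α i * fderiv ℝ h x (0, Pi.single α (Pi.single i 1), 0) := by
        refine Finset.sum_congr rfl fun α _ => Finset.sum_congr rfl fun i _ => ?_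
        rw [hA α i]
      rw [e]
      ring
end

section
/- Let (P, ω = dθ, h) be an exact k-symplectic Hamiltonian system, M = P × ℝ^k its contactification with k-contact form η_M = (dz^α + θ_M^α) ⊗ e_α, and h_M = pr_1* h where pr_1: M → P is the projection. If X_M = (X_1,...,X_k) is a pr_1-projectable k-vector field on M solving the k-contact Hamilton–De Donder–Weyl equations Σ_α ι_{X_α} dη^α = dh_M - Σ_α (R_α h_M) η^α and Σ_α ι_{X_α} η^α = -h_M, then the projected k-vector field X_P = (Tpr_1(X_1),...,Tpr_1(X_k)) on P solves the k-symplectic Hamilton–De Donder–Weyl equation Σ_α ι_{Tpr_1(X_α)} dθ^α = dh. -/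
open scoped BigOperators

variable {E : Type*} [NormedAddCommGroup E] [NormedSpace ℝ E]

/- STATEMENT 11: Let (P, ω = dθ, h) be an exact k-symplectic Hamiltonian system and
(M = P × ℝ^k, η_M, h_M = pr_1^* h) the induced k-contact Hamiltonian system, whose
Reeb fields are R_α = ∂/∂z^α. If X_M is a pr_1-projectable k-vector field on M
solving the k-contact HDW equations, then its projection X_P = (Tpr_1(X_α)) solves
the k-symplectic HDW equation Σ_α ι_{Y_α} dθ^α = dh. -/

lemma fderiv_contactify {k : ℕ} (θ : Fin k → E → (E →L[ℝ] ℝ)) (hθ : ∀ α, ContDiff ℝ (⊤ : ℕ∞) (θ α))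
    (α : Fin k) (m : E × (Fin k → ℝ)) (w v : E × (Fin k → ℝ)) :
    fderiv ℝ (contactify θ α) m w v = fderiv ℝ (θ α) m.1 w.1 v.1 := by
  set L : (E →L[ℝ] ℝ) →L[ℝ] ((E × (Fin k → ℝ)) →L[ℝ] ℝ) :=
    (ContinuousLinearMap.compL ℝ (E × (Fin k → ℝ)) E ℝ).flip
      (ContinuousLinearMap.fst ℝ E (Fin k → ℝ)) with hL
  have h1 : HasFDerivAt (fun m' : E × (Fin k → ℝ) => θ α m'.1)
      ((fderiv ℝ (θ α) m.1).comp (ContinuousLinearMap.fst ℝ E (Fin k → ℝ))) m :=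
    (((hθ α).differentiable (by simp) m.1).hasFDerivAt).comp m (hasFDerivAt_fst)
  have h2 : HasFDerivAt (fun m' : E × (Fin k → ℝ) => L (θ α m'.1))
      (L.comp ((fderiv ℝ (θ α) m.1).comp (ContinuousLinearMap.fst ℝ E (Fin k → ℝ)))) m :=
    (L.hasFDerivAt).comp m h1
  have h3 : HasFDerivAt (contactify θ α)
      (L.comp ((fderiv ℝ (θ α) m.1).comp (ContinuousLinearMap.fst ℝ E (Fin k → ℝ)))) m := by
    have : (contactify θ α) = fun m' : E × (Fin k → ℝ) =>
        ((ContinuousLinearMap.proj α).comp (ContinuousLinearMap.snd ℝ E (Fin k → ℝ))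
          : (E × (Fin k → ℝ)) →L[ℝ] ℝ) + L (θ α m'.1) := by
      funext m'
      simp [contactify, hL]
    rw [this]
    exact h2.const_add _
  rw [h3.fderiv]
  simp [hL]

lemma fderiv_pullback_h (h : E → ℝ) (hh : Differentiable ℝ h) {k : ℕ}
    (m : E × (Fin k → ℝ)) (w : E × (Fin k → ℝ)) :
    fderiv ℝ (fun m' : E × (Fin k → ℝ) => h m'.1) m w = fderiv ℝ h m.1 w.1 := by
  have h1 : HasFDerivAt (fun m' : E × (Fin k → ℝ) => h m'.1)
      ((fderiv ℝ h m.1).comp (ContinuousLinearMap.fst ℝ E (Fin k → ℝ))) m :=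
    ((hh m.1).hasFDerivAt).comp m (hasFDerivAt_fst)
  rw [h1.fderiv]
  rfl

theorem projection_solves_k_symplectic_HDW {k : ℕ} [FiniteDimensional ℝ E]
    (θ : Fin k → E → (E →L[ℝ] ℝ)) (hθ : ∀ α, ContDiff ℝ (⊤ : ℕ∞) (θ α))
    (hnd : ∀ (p : E) (v : E),
      (∀ (α : Fin k) (u : E), extDerivAt (θ α) p v u = 0) → v = 0)
    (h : E → ℝ) (hh : Differentiable ℝ h)
    (X : Fin k → (E × (Fin k → ℝ)) → E × (Fin k → ℝ))
    (Y : Fin k → E → E)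
    -- X is pr_1-projectable with projection Y
    (hproj : ∀ (α : Fin k) (m : E × (Fin k → ℝ)), (X α m).1 = Y α m.1)
    -- first k-contact HDW equation: Σ_α ι_{X_α} dη^α = dh_M - Σ_α (R_α h_M) η^α
    (hHDW1 : ∀ (m : E × (Fin k → ℝ)) (v : E × (Fin k → ℝ)),
      ∑ α : Fin k, extDerivAt (contactify θ α) m (X α m) v
        = fderiv ℝ (fun m' : E × (Fin k → ℝ) => h m'.1) m v
          - ∑ α : Fin k,
              (fderiv ℝ (fun m' : E × (Fin k → ℝ) => h m'.1) m
                  ((0 : E), Pi.single α (1 : ℝ)))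
                * contactify θ α m v)
    -- second k-contact HDW equation: Σ_α ι_{X_α} η^α = -h_M
    (hHDW2 : ∀ m : E × (Fin k → ℝ),
      ∑ α : Fin k, contactify θ α m (X α m) = -h m.1) :
    ∀ (p : E) (v : E),
      ∑ α : Fin k, extDerivAt (θ α) p (Y α p) v = fderiv ℝ h p v := by
  
  intro p v
  have key := hHDW1 (p, 0) (v, 0)
  have e1 : ∀ α : Fin k, extDerivAt (contactify θ α) (p, (0 : Fin k → ℝ))
      (X α (p, 0)) (v, 0) = extDerivAt (θ α) p (Y α p) v := by
    intro α
    unfold extDerivAt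
    rw [fderiv_contactify θ hθ, fderiv_contactify θ hθ, hproj α (p, 0)]
  have e2 : fderiv ℝ (fun m' : E × (Fin k → ℝ) => h m'.1) (p, (0 : Fin k → ℝ))
      ((v, 0) : E × (Fin k → ℝ)) = fderiv ℝ h p v :=
    fderiv_pullback_h h hh _ _
  have e3 : ∀ α : Fin k, fderiv ℝ (fun m' : E × (Fin k → ℝ) => h m'.1)
      (p, (0 : Fin k → ℝ)) ((0 : E), Pi.single α (1 : ℝ)) = 0 := by
    intro α
    rw [fderiv_pullback_h h hh]
    simp
  simp only [e1, e2, e3, zero_mul, Finset.sum_const_zero, sub_zero] at key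
  exact key
end

section
/- On ⊕^2 T*ℝ with coordinates (u, p^t, p^x), 2-symplectic form ω = du ∧ dp^t ⊗ e_1 + du ∧ dp^x ⊗ e_2, and Hamiltonian h = (p^t)^2/(2ρ) - (p^x)^2/(2τ), a 2-vector field X = (X_1, X_2) satisfies ι_{X_1}ω^1 + ι_{X_2}ω^2 = dh if and only if X_1 = (p^t/ρ) ∂/∂u + A^1_t ∂/∂p^t + A^1_x ∂/∂p^x and X_2 = -(p^x/τ) ∂/∂u + A^2_t ∂/∂p^t + A^2_x ∂/∂p^x for functions with A^1_t + A^2_x = 0. -/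
/-! Both sides of the Hamilton–De Donder–Weyl equation are linear forms in the test vector, and
`dh = (p^t/ρ) dp^t - (p^x/τ) dp^x`; evaluating on `∂/∂p^t`, `∂/∂p^x` and `∂/∂u` gives exactly the
three coefficient conditions. -/

lemma fderiv_vibratingStringHamiltonian_apply (ρ τ : ℝ) (x v : ℝ × ℝ × ℝ) :
    fderiv ℝ (fun y : ℝ × ℝ × ℝ => y.2.1 ^ 2 / (2 * ρ) - y.2.2 ^ 2 / (2 * τ)) x v
      = x.2.1 / ρ * v.2.1 - x.2.2 / τ * v.2.2 := by
  have hpt : HasFDerivAt (fun y : ℝ × ℝ × ℝ => y.2.1)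
      ((ContinuousLinearMap.fst ℝ ℝ ℝ).comp (ContinuousLinearMap.snd ℝ ℝ (ℝ × ℝ))) x :=
    hasFDerivAt_fst.comp x hasFDerivAt_snd
  have hpx : HasFDerivAt (fun y : ℝ × ℝ × ℝ => y.2.2)
      ((ContinuousLinearMap.snd ℝ ℝ ℝ).comp (ContinuousLinearMap.snd ℝ ℝ (ℝ × ℝ))) x :=
    hasFDerivAt_snd.comp x hasFDerivAt_snd
  simp only [div_eq_mul_inv]
  rw [(((hpt.pow 2).mul_const (2 * ρ)⁻¹).fun_sub ((hpx.pow 2).mul_const (2 * τ)⁻¹)).fderiv]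
  simp only [mul_inv_rev, Nat.add_one_sub_one, pow_one, nsmul_eq_mul, Nat.cast_ofNat,
    sub_apply, smul_apply, ContinuousLinearMap.comp_apply,
    ContinuousLinearMap.coe_snd', ContinuousLinearMap.coe_fst', smul_eq_mul]
  ring

lemma contraction_eq_linearForm_iff (a₁ b₁ a₂ b₂ α β : ℝ) :
    (∀ v : ℝ × ℝ × ℝ, (a₁ * v.2.1 - v.1 * b₁) + (a₂ * v.2.2 - v.1 * b₂) = α * v.2.1 - β * v.2.2) ↔
      a₁ = α ∧ a₂ = -β ∧ b₁ + b₂ = 0 := by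
  constructor
  · intro h
    have ht := h (0, 1, 0)
    have hx := h (0, 0, 1)
    have hu := h (1, 0, 0)
    simp only [mul_zero, mul_one, zero_mul, one_mul, sub_zero, zero_sub, add_zero, zero_add]
      at ht hx hu
    exact ⟨ht, by linarith, by linarith⟩
  · rintro ⟨rfl, rfl, hb⟩ v
    linear_combination (-v.1) * hb

theorem vibrating_string_Hamiltonian_2_vector_fields_general
    (ρ τ : ℝ)
    (X₁ X₂ : ℝ × ℝ × ℝ → ℝ × ℝ × ℝ) :
    (∀ x v : ℝ × ℝ × ℝ,
      ((X₁ x).1 * v.2.1 - v.1 * (X₁ x).2.1)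
        + ((X₂ x).1 * v.2.2 - v.1 * (X₂ x).2.2)
      = fderiv ℝ (fun y : ℝ × ℝ × ℝ => y.2.1 ^ 2 / (2 * ρ) - y.2.2 ^ 2 / (2 * τ)) x v) ↔
    (∀ x : ℝ × ℝ × ℝ,
      (X₁ x).1 = x.2.1 / ρ ∧
      (X₂ x).1 = -(x.2.2 / τ) ∧
      (X₁ x).2.1 + (X₂ x).2.2 = 0) := by
  simp only [fderiv_vibratingStringHamiltonian_apply]
  exact forall_congr' fun x => contraction_eq_linearForm_iff _ _ _ _ _ _

theorem vibrating_string_Hamiltonian_2_vector_fields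
    (ρ τ : ℝ) (hρ : 0 < ρ) (hτ : 0 < τ)
    (X₁ X₂ : ℝ × ℝ × ℝ → ℝ × ℝ × ℝ) :
    (∀ x v : ℝ × ℝ × ℝ,
      ((X₁ x).1 * v.2.1 - v.1 * (X₁ x).2.1)
        + ((X₂ x).1 * v.2.2 - v.1 * (X₂ x).2.2)
      = fderiv ℝ (fun y : ℝ × ℝ × ℝ => y.2.1 ^ 2 / (2 * ρ) - y.2.2 ^ 2 / (2 * τ)) x v) ↔
    (∀ x : ℝ × ℝ × ℝ,
      (X₁ x).1 = x.2.1 / ρ ∧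
      (X₂ x).1 = -(x.2.2 / τ) ∧
      (X₁ x).2.1 + (X₂ x).2.2 = 0) :=
  vibrating_string_Hamiltonian_2_vector_fields_general ρ τ X₁ X₂
end
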